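/- Let B be the ℤ²-indexed algebra associated to the free algebra k⟨x, y⟩ graded by deg(x) = (1,0), deg(y) = (0,1), with ℤ² given the product order. Then the tail e_{(0,0)}B_{>(1,1)} is not a finitely generated right B-module; in particular the elements x²y, x³y, x⁴y, … are pairwise right linearly independent elements of e_{(0,0)}B_{>(1,1)}. -/

import Mathlib

/-! The words `x^n y` are pairwise prefix-incomparable, so left multiplication by them sends
the monomial basis to disjoint sets of words; this gives right linear independence.
If finitely many tail elements `gᵢ` generated the tail, take `N` at least the length of every
word occurring in them. A monomial of `x^(N+2) y = ∑ gᵢ cᵢ` must come from a word of some `gᵢ`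
that is a prefix of `x^(N+2) y` of length at most `N`, hence a power of `x`; but every word
of the tail contains `y`. -/

open MonoidAlgebra

/-- The multidegree of a word in the free monoid on `x = 0`, `y = 1`. -/
def wordDeg (w : FreeMonoid (Fin 2)) : ℤ × ℤ :=
  ((w.toList.count 0 : ℤ), (w.toList.count 1 : ℤ))

/-- The part of the free algebra `k⟨x,y⟩` corresponding to the tail
`e_{(0,0)}B_{>(1,1)}` of the associated `ℤ²`-indexed algebra `B = B_{ℤ²}(k⟨x,y⟩)`:
sums of homogeneous components of multidegree strictly greater than `(1,1)` in the
product order. -/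
def tailSet (k : Type*) [Field k] : Set (MonoidAlgebra k (FreeMonoid (Fin 2))) :=
  {a | ∀ w ∈ a.coeff.support, ((1 : ℤ), (1 : ℤ)) < wordDeg w}

namespace MonoidAlgebra

variable {k M : Type*} [Semiring k] [Monoid M]

section LeftCancel

variable [IsLeftCancelMul M] {w w' : M} {a b : MonoidAlgebra k M}

theorem eq_zero_of_single_mul_add_single_mul_eq_zero (hww' : ∀ u v, w * u ≠ w' * v)
    (hab : single w 1 * a + single w' 1 * b = 0) : a = 0 := by
  ext u
  have hu := congr(($hab).coeff (w * u))
  rwa [coeff_add, Finsupp.add_apply,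
    coeff_single_mul_eq_mul_coeff u fun _ _ => mul_right_inj w, one_mul,
    coeff_single_mul_of_forall_mul_ne _ _ fun v => (hww' u v).symm, add_zero] at hu

theorem eq_zero_and_eq_zero_of_single_mul_add_single_mul_eq_zero
    (hww' : ∀ u v, w * u ≠ w' * v) (hab : single w 1 * a + single w' 1 * b = 0) :
    a = 0 ∧ b = 0 :=
  ⟨eq_zero_of_single_mul_add_single_mul_eq_zero hww' hab,
    eq_zero_of_single_mul_add_single_mul_eq_zero (fun u v => (hww' v u).symm)
      (by rwa [add_comm])⟩

end LeftCancel

theorem exists_mul_eq_of_mem_support_sum_mul {ι : Type*} [Fintype ι]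
    (g c : ι → MonoidAlgebra k M) {w : M} (hw : w ∈ (∑ l, g l * c l).coeff.support) :
    ∃ l, ∃ p ∈ (g l).coeff.support, ∃ q, p * q = w := by
  classical
  rw [coeff_sum] at hw
  obtain ⟨l, -, hl⟩ := Finsupp.mem_support_finsetSum _ hw
  obtain ⟨p, hp, q, -, hpq⟩ := Finset.mem_mul.mp (support_coeff_mul_subset _ _ hl)
  exact ⟨l, p, hp, q, hpq⟩

end MonoidAlgebra

theorem FreeMonoid.toList_of_pow {α : Type*} (a : α) (n : ℕ) :
    (FreeMonoid.of a ^ n).toList = List.replicate n a := by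
  induction n with
  | zero => rfl
  | succ n ih => rw [pow_succ, toList_mul, ih, toList_of, List.replicate_succ']

def xPowMulY (n : ℕ) : FreeMonoid (Fin 2) := FreeMonoid.of 0 ^ n * FreeMonoid.of 1

theorem toList_xPowMulY (n : ℕ) : (xPowMulY n).toList = List.replicate n 0 ++ [1] := by
  simp [xPowMulY, FreeMonoid.toList_of_pow]

theorem wordDeg_xPowMulY (n : ℕ) : wordDeg (xPowMulY n) = ((n : ℤ), 1) := by
  simp [wordDeg, toList_xPowMulY, List.count_replicate]

theorem idxOf_one_toList_xPowMulY_mul (n : ℕ) (u : FreeMonoid (Fin 2)) :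
    (xPowMulY n * u).toList.idxOf 1 = n := by
  simp [toList_xPowMulY, List.idxOf_append_of_notMem]

theorem xPowMulY_mul_ne_xPowMulY_mul {m m' : ℕ} (h : m ≠ m') (u v : FreeMonoid (Fin 2)) :
    xPowMulY m * u ≠ xPowMulY m' * v := fun huv =>
  h <| by rw [← idxOf_one_toList_xPowMulY_mul m u, huv, idxOf_one_toList_xPowMulY_mul]

theorem snd_wordDeg_eq_zero_of_mul_eq_xPowMulY {p q : FreeMonoid (Fin 2)} {n : ℕ}
    (hpq : p * q = xPowMulY n) (hp : p.toList.length ≤ n) : (wordDeg p).2 = 0 := by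
  have hprefix : p.toList = (List.replicate n (0 : Fin 2) ++ [1]).take p.toList.length := by
    rw [← toList_xPowMulY, ← hpq, FreeMonoid.toList_mul, List.take_left]
  rw [wordDeg, hprefix, List.take_append_of_le_length (by simpa using hp), List.take_replicate]
  simp [List.count_replicate]

theorem of_pow_mul_of_eq_single_xPowMulY (k : Type*) [Semiring k] (n : ℕ) :
    MonoidAlgebra.of k (FreeMonoid (Fin 2)) (FreeMonoid.of 0) ^ n *
        MonoidAlgebra.of k (FreeMonoid (Fin 2)) (FreeMonoid.of 1) =
      single (xPowMulY n) 1 := by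
  rw [of_apply, of_apply, single_pow, single_mul_single, one_pow, one_mul, xPowMulY]

theorem single_xPowMulY_mem_tailSet (k : Type*) [Field k] {n : ℕ} (hn : 2 ≤ n) :
    single (xPowMulY n) (1 : k) ∈ tailSet k := by
  intro w hw
  rw [Finset.mem_singleton.mp (Finsupp.support_single_subset hw), wordDeg_xPowMulY]
  exact Prod.mk_lt_mk.mpr (Or.inl ⟨by omega, le_rfl⟩)

theorem not_exists_finite_generators_tailSet (k : Type*) [Field k] :
    ¬ ∃ (n : ℕ) (g : Fin n → MonoidAlgebra k (FreeMonoid (Fin 2))),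
        (∀ l, g l ∈ tailSet k) ∧
        ∀ x ∈ tailSet k, ∃ c : Fin n → MonoidAlgebra k (FreeMonoid (Fin 2)),
          x = ∑ l, g l * c l := by
  rintro ⟨n, g, hg, hspan⟩
  obtain ⟨N, hN⟩ : ∃ N, ∀ l, ∀ p ∈ (g l).coeff.support, p.toList.length ≤ N := by
    let maxLength l := (g l).coeff.support.sup (·.toList.length)
    exact ⟨∑ l, maxLength l, fun l p hp => (Finset.le_sup (f := (·.toList.length)) hp).trans
      (Finset.single_le_sum (f := maxLength) (fun _ _ => Nat.zero_le _) (Finset.mem_univ l))⟩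
  obtain ⟨c, hc⟩ := hspan _ (single_xPowMulY_mem_tailSet k (n := N + 2) le_add_self)
  have hmem : xPowMulY (N + 2) ∈ (∑ l, g l * c l).coeff.support := by
    rw [← hc]; simp
  obtain ⟨l, p, hp, q, hpq⟩ := exists_mul_eq_of_mem_support_sum_mul g c hmem
  have hy : (1 : ℤ) ≤ (wordDeg p).2 := (hg l p hp).le.2
  have hno_y := snd_wordDeg_eq_zero_of_mul_eq_xPowMulY hpq (by have := hN l p hp; omega)
  omega

/-- For the free algebra `k⟨x,y⟩`, graded by `ℤ²` with `deg x = (1,0)`, `deg y = (0,1)`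
and `ℤ²` carrying the product order, the tail `e_{(0,0)}B_{>(1,1)}` of the associated
`ℤ²`-indexed algebra is not finitely generated as a right module; in particular the
elements `x²y, x³y, x⁴y, …` all lie in this tail and are pairwise right linearly
independent. -/
theorem freeAlgebra_tail_not_finitely_generated (k : Type*) [Field k] :
    (∀ m : ℕ,
      (MonoidAlgebra.of k (FreeMonoid (Fin 2)) (FreeMonoid.of 0)) ^ (m + 2) *
        MonoidAlgebra.of k (FreeMonoid (Fin 2)) (FreeMonoid.of 1) ∈ tailSet k) ∧
    (∀ m m' : ℕ, m ≠ m' →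
      ∀ a b : MonoidAlgebra k (FreeMonoid (Fin 2)),
        (MonoidAlgebra.of k (FreeMonoid (Fin 2)) (FreeMonoid.of 0)) ^ (m + 2) *
            MonoidAlgebra.of k (FreeMonoid (Fin 2)) (FreeMonoid.of 1) * a +
          (MonoidAlgebra.of k (FreeMonoid (Fin 2)) (FreeMonoid.of 0)) ^ (m' + 2) *
            MonoidAlgebra.of k (FreeMonoid (Fin 2)) (FreeMonoid.of 1) * b = 0 →
        a = 0 ∧ b = 0) ∧
    ¬ ∃ (n : ℕ) (g : Fin n → MonoidAlgebra k (FreeMonoid (Fin 2))),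
        (∀ l, g l ∈ tailSet k) ∧
        ∀ x ∈ tailSet k, ∃ c : Fin n → MonoidAlgebra k (FreeMonoid (Fin 2)),
          x = ∑ l, g l * c l := by
  simp only [of_pow_mul_of_eq_single_xPowMulY]
  refine ⟨fun m => single_xPowMulY_mem_tailSet k le_add_self, ?_,
    not_exists_finite_generators_tailSet k⟩
  intro m m' hmm' a b hab
  exact eq_zero_and_eq_zero_of_single_mul_add_single_mul_eq_zero
    (xPowMulY_mul_ne_xPowMulY_mul (by omega)) hab
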